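/- arXiv:1903.09812 — 14 statements merged into one kernel-verified Lean document; each statement's English description precedes it below -/
import Mathlib

section
/- Let A be an n×n quaternion matrix that possesses a group inverse X and a Moore–Penrose inverse Y. Then the matrix Z := X·A·Y satisfies A·Z = A·Y and R_r(Z) = R_r(A); that is, Z = A^# A A† is a right core inverse of A. -/
/-!
Since `X = X A X = A X²`, the matrix `Z = X A Y` factors as `A (X² A Y)`, so its column space
lies in that of `A`. Conversely `Z A² = X (A Y A) A = X A² = A X A = A`, so `A` factors through `Z`.
-/

section Semigroup

variable {S : Type*} [Semigroup S] {a x y : S}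

theorem eq_mul_mul_self_of_mul_mul_eq_of_commute (hx : x * a * x = x) (hax : a * x = x * a) :
    x = a * (x * x) :=
  calc x = x * a * x := hx.symm
    _ = a * (x * x) := by rw [← hax, mul_assoc]

theorem mul_mul_mul_mul_self_eq (hx : a * x * a = a) (hax : a * x = x * a)
    (hy : a * y * a = a) : x * a * y * (a * a) = a :=
  calc x * a * y * (a * a) = x * (a * y * a) * a := by simp only [mul_assoc]
    _ = a := by rw [hy, ← hax, hx]

end Semigroup

namespace Matrix

variable {m n R : Type*} [Fintype n] [NonUnitalSemiring R]

theorem range_mulVec_mul_subset (A : Matrix m n R) (B : Matrix n n R) :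
    Set.range (A * B).mulVec ⊆ Set.range A.mulVec := by
  rintro _ ⟨v, rfl⟩
  exact ⟨B *ᵥ v, mulVec_mulVec v A B⟩

end Matrix

theorem right_core_inverse_of_group_and_mp_general {n : ℕ}
    (A X Y : Matrix (Fin n) (Fin n) (Quaternion ℝ))
    (hX1 : A * X * A = A) (hX2 : X * A * X = X) (hX3 : A * X = X * A)
    (hY1 : A * Y * A = A) :
    A * (X * A * Y) = A * Y ∧
    {y : Fin n → Quaternion ℝ | ∃ x, (X * A * Y).mulVec x = y} =
      {y : Fin n → Quaternion ℝ | ∃ x, A.mulVec x = y} := by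
  refine ⟨by rw [← mul_assoc, ← mul_assoc, hX1], ?_⟩
  have hZ : X * A * Y = A * (X * X * (A * Y)) := by
    conv_lhs => rw [eq_mul_mul_self_of_mul_mul_eq_of_commute hX2 hX3]
    simp only [mul_assoc]
  show Set.range (X * A * Y).mulVec = Set.range A.mulVec
  refine Set.Subset.antisymm ?_ ?_
  · exact hZ ▸ Matrix.range_mulVec_mul_subset A _
  · simpa only [mul_mul_mul_mul_self_eq hX1 hX3 hY1] using
      Matrix.range_mulVec_mul_subset (X * A * Y) (A * A)

/-- The matrix `Z = X·A·Y` (group inverse times `A` times Moore–Penrose inverse)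
is a right core inverse of the quaternion matrix `A`:
`A·Z = A·Y` and the right column space of `Z` equals that of `A`. -/
theorem right_core_inverse_of_group_and_mp {n : ℕ}
    (A X Y : Matrix (Fin n) (Fin n) (Quaternion ℝ))
    (hX1 : A * X * A = A) (hX2 : X * A * X = X) (hX3 : A * X = X * A)
    (hY1 : A * Y * A = A) (hY2 : Y * A * Y = Y)
    (hY3 : (A * Y).conjTranspose = A * Y) (hY4 : (Y * A).conjTranspose = Y * A) :
    A * (X * A * Y) = A * Y ∧
    {y : Fin n → Quaternion ℝ | ∃ x, (X * A * Y).mulVec x = y} =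
      {y : Fin n → Quaternion ℝ | ∃ x, A.mulVec x = y} :=
  right_core_inverse_of_group_and_mp_general A X Y hX1 hX2 hX3 hY1
end

section
/- Let A be an n×n quaternion matrix with group inverse X and Moore–Penrose inverse Y, and set Z := X·A·Y and Z' := Y·A·X. If W is a Moore–Penrose inverse of Z, then W·Z = Z·W, and if W' is a Moore–Penrose inverse of Z', then W'·Z' = Z'·W'; that is, the right core inverse and the left core inverse of A are EP matrices. -/
/-!
An element `z` of a star semigroup is EP as soon as it has an inner inverse `v` that commutes
with it and makes `z * v` self-adjoint: for any Moore–Penrose inverse `w` of `z`, the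
projections `z * w` and `w * z` do not depend on the choice of `{1,3}`- resp. `{1,4}`-inverse,
so `z * w = z * v = v * z = w * z`. For the right core inverse `X * A * Y` such a `v` is
`A * A * Y` (with `z * v = v * z = A * Y`), and for the left core inverse `Y * A * X` it is
`Y * A * A` (with `z * v = v * z = Y * A`).
-/

section StarSemigroup

variable {R : Type*} [Semigroup R]

theorem mul_mul_eq_self_of_commute_inner_inverse {A X : R} (hX1 : A * X * A = A)
    (hX3 : A * X = X * A) : X * A * A = A ∧ A * A * X = A :=
  ⟨by rw [← hX3, hX1], by rw [mul_assoc, hX3, ← mul_assoc, hX1]⟩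

variable [StarMul R]

-- The paper's `B†B = BB†`, phrased without choosing a Moore–Penrose inverse `B†`.
def IsEP (z : R) : Prop :=
  ∀ w : R, z * w * z = z → w * z * w = w → IsSelfAdjoint (z * w) → IsSelfAdjoint (w * z) →
    w * z = z * w

theorem mul_inner_inverse_eq_of_isSelfAdjoint {z w v : R}
    (hw : z * w * z = z) (hzw : IsSelfAdjoint (z * w))
    (hv : z * v * z = z) (hzv : IsSelfAdjoint (z * v)) : z * w = z * v :=
  calc z * w = star (z * v * z * w) := by rw [hv, hzw.star_eq]
    _ = star (z * w) * star (z * v) := by rw [mul_assoc (z * v), star_mul]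
    _ = z * v := by rw [hzw.star_eq, hzv.star_eq, ← mul_assoc, hw]

theorem inner_inverse_mul_eq_of_isSelfAdjoint {z w v : R}
    (hw : z * w * z = z) (hwz : IsSelfAdjoint (w * z))
    (hv : z * v * z = z) (hvz : IsSelfAdjoint (v * z)) : w * z = v * z :=
  calc w * z = star (w * (z * v * z)) := by rw [hv, hwz.star_eq]
    _ = star (v * z) * star (w * z) := by simp only [← star_mul, mul_assoc]
    _ = v * z := by rw [hwz.star_eq, hvz.star_eq, mul_assoc, ← mul_assoc z, hw]

theorem isEP_of_commuting_inner_inverse {z v : R} (hv : z * v * z = z) (hcomm : z * v = v * z)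
    (hzv : IsSelfAdjoint (z * v)) : IsEP z := by
  intro w hw _ hzw hwz
  calc w * z = v * z := inner_inverse_mul_eq_of_isSelfAdjoint hw hwz hv (hcomm ▸ hzv)
    _ = z * v := hcomm.symm
    _ = z * w := (mul_inner_inverse_eq_of_isSelfAdjoint hw hzw hv hzv).symm

variable {A X Y : R}

theorem isEP_rightCoreInverse (hX1 : A * X * A = A) (hX3 : A * X = X * A)
    (hY1 : A * Y * A = A) (hAY : IsSelfAdjoint (A * Y)) : IsEP (X * A * Y) := by
  obtain ⟨hXAA, hAAX⟩ := mul_mul_eq_self_of_commute_inner_inverse hX1 hX3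
  have hXAY : X * A * Y = A * X * Y := by rw [hX3]
  have hzv : X * A * Y * (A * A * Y) = A * Y :=
    calc X * A * Y * (A * A * Y) = X * (A * Y * A) * A * Y := by simp only [mul_assoc]
      _ = A * Y := by rw [hY1, hXAA]
  have hvz : A * A * Y * (X * A * Y) = A * Y :=
    calc A * A * Y * (X * A * Y) = A * (A * Y * A) * X * Y := by
          rw [hXAY]; simp only [mul_assoc]
      _ = A * Y := by rw [hY1, hAAX]
  refine isEP_of_commuting_inner_inverse (v := A * A * Y) ?_ (hzv.trans hvz.symm)
    (by rw [hzv]; exact hAY)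
  calc X * A * Y * (A * A * Y) * (X * A * Y) = A * Y * A * X * Y := by
        rw [hzv, hXAY]; simp only [mul_assoc]
    _ = X * A * Y := by rw [hY1, hXAY]

theorem isEP_leftCoreInverse (hX1 : A * X * A = A) (hX3 : A * X = X * A)
    (hY1 : A * Y * A = A) (hYA : IsSelfAdjoint (Y * A)) : IsEP (Y * A * X) := by
  obtain ⟨hXAA, hAAX⟩ := mul_mul_eq_self_of_commute_inner_inverse hX1 hX3
  have hYAX : Y * A * X = Y * X * A := by rw [mul_assoc, hX3, ← mul_assoc]
  have hzv : Y * A * X * (Y * A * A) = Y * A :=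
    calc Y * A * X * (Y * A * A) = Y * (X * (A * Y * A) * A) := by
          rw [hYAX]; simp only [mul_assoc]
      _ = Y * A := by rw [hY1, hXAA]
  have hvz : Y * A * A * (Y * A * X) = Y * A :=
    calc Y * A * A * (Y * A * X) = Y * (A * (A * Y * A) * X) := by simp only [mul_assoc]
      _ = Y * A := by rw [hY1, hAAX]
  refine isEP_of_commuting_inner_inverse (v := Y * A * A) ?_ (hzv.trans hvz.symm)
    (by rw [hzv]; exact hYA)
  calc Y * A * X * (Y * A * A) * (Y * A * X) = Y * X * (A * Y * A) := by
        rw [mul_assoc _ (Y * A * A), hvz, hYAX]; simp only [mul_assoc]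
    _ = Y * A * X := by rw [hY1, hYAX]

end StarSemigroup

theorem core_inverses_are_EP_general {n : ℕ}
    (A X Y : Matrix (Fin n) (Fin n) (Quaternion ℝ))
    (hX1 : A * X * A = A) (hX3 : A * X = X * A)
    (hY1 : A * Y * A = A)
    (hY3 : (A * Y).conjTranspose = A * Y) (hY4 : (Y * A).conjTranspose = Y * A) :
    (∀ W : Matrix (Fin n) (Fin n) (Quaternion ℝ),
      (X * A * Y) * W * (X * A * Y) = X * A * Y →
      W * (X * A * Y) * W = W →
      ((X * A * Y) * W).conjTranspose = (X * A * Y) * W →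
      (W * (X * A * Y)).conjTranspose = W * (X * A * Y) →
      W * (X * A * Y) = (X * A * Y) * W) ∧
    (∀ W' : Matrix (Fin n) (Fin n) (Quaternion ℝ),
      (Y * A * X) * W' * (Y * A * X) = Y * A * X →
      W' * (Y * A * X) * W' = W' →
      ((Y * A * X) * W').conjTranspose = (Y * A * X) * W' →
      (W' * (Y * A * X)).conjTranspose = W' * (Y * A * X) →
      W' * (Y * A * X) = (Y * A * X) * W') :=
  ⟨isEP_rightCoreInverse hX1 hX3 hY1 hY3,
    isEP_leftCoreInverse hX1 hX3 hY1 hY4⟩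

/-- The right core inverse `Z = X·A·Y` and the left core inverse `Z' = Y·A·X`
of a quaternion matrix are EP matrices: any Moore–Penrose inverse of them
commutes with them. -/
theorem core_inverses_are_EP {n : ℕ}
    (A X Y : Matrix (Fin n) (Fin n) (Quaternion ℝ))
    (hX1 : A * X * A = A) (hX2 : X * A * X = X) (hX3 : A * X = X * A)
    (hY1 : A * Y * A = A) (hY2 : Y * A * Y = Y)
    (hY3 : (A * Y).conjTranspose = A * Y) (hY4 : (Y * A).conjTranspose = Y * A) :
    (∀ W : Matrix (Fin n) (Fin n) (Quaternion ℝ),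
      (X * A * Y) * W * (X * A * Y) = X * A * Y →
      W * (X * A * Y) * W = W →
      ((X * A * Y) * W).conjTranspose = (X * A * Y) * W →
      (W * (X * A * Y)).conjTranspose = W * (X * A * Y) →
      W * (X * A * Y) = (X * A * Y) * W) ∧
    (∀ W' : Matrix (Fin n) (Fin n) (Quaternion ℝ),
      (Y * A * X) * W' * (Y * A * X) = Y * A * X →
      W' * (Y * A * X) * W' = W' →
      ((Y * A * X) * W').conjTranspose = (Y * A * X) * W' →
      (W' * (Y * A * X)).conjTranspose = W' * (Y * A * X) →
      W' * (Y * A * X) = (Y * A * X) * W') :=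
  core_inverses_are_EP_general A X Y hX1 hX3 hY1 hY3 hY4
end

section
/- Let A be an n×n quaternion matrix with group inverse X and Moore–Penrose inverse Y, and set Z := X·A·Y and Z' := Y·A·X. Then A²·Y is a Moore–Penrose inverse of Z, i.e. Z(A²Y)Z = Z, (A²Y)Z(A²Y) = A²Y, (Z·A²Y)* = Z·A²Y and ((A²Y)·Z)* = (A²Y)·Z; likewise Y·A² is a Moore–Penrose inverse of Z'. (In the paper's notation: (A^⊕)† = A P_A and (A_⊕)† = Q_A A.) -/
/-!
For the right core inverse `z = x a y`, the commutation `a x = x a` together with `a y a = a`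
collapses both products of `z` with `w = a² y` to the Hermitian idempotent `a y`, which fixes
`z` and `w` from the left; the four Penrose equations follow at once. The left core inverse
`y a x` is the dual case: applying `star` turns it into the right core inverse of `star a`.
-/

section MoorePenrose

variable {R : Type*} [Monoid R] [StarMul R]

structure IsMoorePenroseInverse (a b : R) : Prop where
  penrose1 : a * b * a = a
  penrose2 : b * a * b = b
  penrose3 : star (a * b) = a * b
  penrose4 : star (b * a) = b * a

theorem IsMoorePenroseInverse.star {a b : R} (h : IsMoorePenroseInverse a b) :
    IsMoorePenroseInverse (star a) (star b) where
  penrose1 := by rw [← star_mul, ← star_mul, ← mul_assoc, h.penrose1]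
  penrose2 := by rw [← star_mul, ← star_mul, ← mul_assoc, h.penrose2]
  penrose3 := by rw [← star_mul, star_star, h.penrose4]
  penrose4 := by rw [← star_mul, star_star, h.penrose3]

theorem isMoorePenroseInverse_mul_mul_sq_mul {a x y : R} (hx₁ : a * x * a = a)
    (hx : Commute a x) (hy₁ : a * y * a = a) (hy₃ : star (a * y) = a * y) :
    IsMoorePenroseInverse (x * a * y) (a ^ 2 * y) := by
  have hxaa : x * a * a = a := by rw [← hx.eq, hx₁]
  have haax : a * a * x = a := by rw [mul_assoc, hx.eq, ← mul_assoc, hx₁]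
  have hzw : x * a * y * (a ^ 2 * y) = a * y := by
    calc x * a * y * (a ^ 2 * y) = x * (a * y * a) * a * y := by simp only [pow_two, mul_assoc]
      _ = a * y := by rw [hy₁, hxaa]
  have hwz : a ^ 2 * y * (x * a * y) = a * y := by
    calc a ^ 2 * y * (x * a * y) = a * (a * y * a) * x * y := by rw [← hx.eq]; simp only [pow_two, mul_assoc]
      _ = a * y := by rw [hy₁, haax]
  have hpz : a * y * (x * a * y) = x * a * y := by
    calc a * y * (x * a * y) = a * y * a * x * y := by rw [← hx.eq]; simp only [mul_assoc]
      _ = x * a * y := by rw [hy₁, hx.eq]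
  have hpw : a * y * (a ^ 2 * y) = a ^ 2 * y := by
    calc a * y * (a ^ 2 * y) = a * y * a * (a * y) := by simp only [pow_two, mul_assoc]
      _ = a ^ 2 * y := by rw [hy₁, pow_two, mul_assoc]
  exact ⟨by rw [hzw, hpz], by rw [hwz, hpw], by rw [hzw, hy₃], by rw [hwz, hy₃]⟩

theorem isMoorePenroseInverse_mul_mul_mul_sq {a x y : R} (hx₁ : a * x * a = a)
    (hx : Commute a x) (hy₁ : a * y * a = a) (hy₄ : star (y * a) = y * a) :
    IsMoorePenroseInverse (y * a * x) (y * a ^ 2) := by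
  have h := isMoorePenroseInverse_mul_mul_sq_mul (a := star a) (x := star x) (y := star y)
    (by simpa only [star_mul, mul_assoc] using congrArg star hx₁) hx.star_star
    (by simpa only [star_mul, mul_assoc] using congrArg star hy₁)
    (by rw [← star_mul, star_star, hy₄])
  simpa only [← star_pow, ← star_mul, star_star, mul_assoc] using h.star

end MoorePenrose

theorem mp_of_core_inverses_general {n : ℕ}
    (A X Y : Matrix (Fin n) (Fin n) (Quaternion ℝ))
    (hX1 : A * X * A = A) (hX3 : A * X = X * A)
    (hY1 : A * Y * A = A)
    (hY3 : (A * Y).conjTranspose = A * Y) (hY4 : (Y * A).conjTranspose = Y * A) :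
    ((X * A * Y) * (A ^ 2 * Y) * (X * A * Y) = X * A * Y ∧
     (A ^ 2 * Y) * (X * A * Y) * (A ^ 2 * Y) = A ^ 2 * Y ∧
     ((X * A * Y) * (A ^ 2 * Y)).conjTranspose = (X * A * Y) * (A ^ 2 * Y) ∧
     ((A ^ 2 * Y) * (X * A * Y)).conjTranspose = (A ^ 2 * Y) * (X * A * Y)) ∧
    ((Y * A * X) * (Y * A ^ 2) * (Y * A * X) = Y * A * X ∧
     (Y * A ^ 2) * (Y * A * X) * (Y * A ^ 2) = Y * A ^ 2 ∧
     ((Y * A * X) * (Y * A ^ 2)).conjTranspose = (Y * A * X) * (Y * A ^ 2) ∧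
     ((Y * A ^ 2) * (Y * A * X)).conjTranspose = (Y * A ^ 2) * (Y * A * X)) := by
  obtain ⟨r1, r2, r3, r4⟩ := isMoorePenroseInverse_mul_mul_sq_mul hX1 hX3 hY1 hY3
  obtain ⟨l1, l2, l3, l4⟩ := isMoorePenroseInverse_mul_mul_mul_sq hX1 hX3 hY1 hY4
  exact ⟨⟨r1, r2, r3, r4⟩, l1, l2, l3, l4⟩

/-- `A²·Y` is a Moore–Penrose inverse of the right core inverse `Z = X·A·Y`,
and `Y·A²` is a Moore–Penrose inverse of the left core inverse `Z' = Y·A·X`. -/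
theorem mp_of_core_inverses {n : ℕ}
    (A X Y : Matrix (Fin n) (Fin n) (Quaternion ℝ))
    (hX1 : A * X * A = A) (hX2 : X * A * X = X) (hX3 : A * X = X * A)
    (hY1 : A * Y * A = A) (hY2 : Y * A * Y = Y)
    (hY3 : (A * Y).conjTranspose = A * Y) (hY4 : (Y * A).conjTranspose = Y * A) :
    ((X * A * Y) * (A ^ 2 * Y) * (X * A * Y) = X * A * Y ∧
     (A ^ 2 * Y) * (X * A * Y) * (A ^ 2 * Y) = A ^ 2 * Y ∧
     ((X * A * Y) * (A ^ 2 * Y)).conjTranspose = (X * A * Y) * (A ^ 2 * Y) ∧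
     ((A ^ 2 * Y) * (X * A * Y)).conjTranspose = (A ^ 2 * Y) * (X * A * Y)) ∧
    ((Y * A * X) * (Y * A ^ 2) * (Y * A * X) = Y * A * X ∧
     (Y * A ^ 2) * (Y * A * X) * (Y * A ^ 2) = Y * A ^ 2 ∧
     ((Y * A * X) * (Y * A ^ 2)).conjTranspose = (Y * A * X) * (Y * A ^ 2) ∧
     ((Y * A ^ 2) * (Y * A * X)).conjTranspose = (Y * A ^ 2) * (Y * A * X)) :=
  mp_of_core_inverses_general A X Y hX1 hX3 hY1 hY3 hY4
end

section
/- Let A be an n×n quaternion matrix with group inverse X and Moore–Penrose inverse Y, and set Z := X·A·Y and Z' := Y·A·X. Then A²·Y is a group inverse of Z, i.e. Z(A²Y)Z = Z, (A²Y)Z(A²Y) = A²Y and Z·(A²Y) = (A²Y)·Z; likewise Y·A² is a group inverse of Z'. (In the paper's notation: (A^⊕)^# = A P_A and (A_⊕)^# = Q_A A.) -/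
/-!
If `a x a = a`, `a x = x a` and `a y a = a`, then both products of `x a y` and `a² y` collapse
to `a y`, from which the three group-inverse identities follow at once. The statement for `y a x`
and `y a²` is the same one read in the opposite monoid.
-/

open MulOpposite

def IsGroupInverse {M : Type*} [Mul M] (a b : M) : Prop :=
  a * b * a = a ∧ b * a * b = b ∧ a * b = b * a

section

variable {M : Type*} [Monoid M]

theorem isGroupInverse_op_iff {a b : M} :
    IsGroupInverse (op a) (op b) ↔ IsGroupInverse a b := by
  simp only [IsGroupInverse, ← op_mul, op_inj, mul_assoc, eq_comm (a := b * a)]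

theorem isGroupInverse_mul_mul_sq_mul {a x y : M} (hxa : a * x * a = a) (hax : Commute a x)
    (hya : a * y * a = a) : IsGroupInverse (x * a * y) (a ^ 2 * y) := by
  have hcore_sq : x * a * y * (a ^ 2 * y) = a * y :=
    calc x * a * y * (a ^ 2 * y) = x * (a * y * a) * a * y := by simp only [sq, mul_assoc]
      _ = a * x * a * y := by rw [hya, hax.eq]
      _ = a * y := by rw [hxa]
  have hsq_core : a ^ 2 * y * (x * a * y) = a * y :=
    calc a ^ 2 * y * (x * a * y) = a * (a * y * a) * x * y := by
          rw [← hax.eq]; simp only [sq, mul_assoc]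
      _ = a * (x * a) * y := by rw [hya, mul_assoc a a x, hax.eq]
      _ = a * y := by rw [← mul_assoc, hxa]
  refine ⟨?_, ?_, hcore_sq.trans hsq_core.symm⟩
  · calc x * a * y * (a ^ 2 * y) * (x * a * y) = a * y * a * x * y := by
          rw [hcore_sq, ← hax.eq]; simp only [mul_assoc]
      _ = x * a * y := by rw [hya, hax.eq]
  · calc a ^ 2 * y * (x * a * y) * (a ^ 2 * y) = a * y * a * a * y := by
          rw [hsq_core]; simp only [sq, mul_assoc]
      _ = a ^ 2 * y := by rw [hya, sq]

theorem isGroupInverse_mul_mul_mul_sq {a x y : M} (hxa : a * x * a = a) (hax : Commute a x)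
    (hya : a * y * a = a) : IsGroupInverse (y * a * x) (y * a ^ 2) := by
  rw [← isGroupInverse_op_iff]
  simpa only [op_mul, op_pow, mul_assoc] using
    isGroupInverse_mul_mul_sq_mul (M := Mᵐᵒᵖ) (a := op a) (x := op x) (y := op y)
      (by simpa only [← op_mul, mul_assoc] using congrArg op hxa) hax.op
      (by simpa only [← op_mul, mul_assoc] using congrArg op hya)

end

theorem group_inverse_of_core_inverses_general {n : ℕ}
    (A X Y : Matrix (Fin n) (Fin n) (Quaternion ℝ))
    (hX1 : A * X * A = A) (hX3 : A * X = X * A)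
    (hY1 : A * Y * A = A) :
    ((X * A * Y) * (A ^ 2 * Y) * (X * A * Y) = X * A * Y ∧
     (A ^ 2 * Y) * (X * A * Y) * (A ^ 2 * Y) = A ^ 2 * Y ∧
     (X * A * Y) * (A ^ 2 * Y) = (A ^ 2 * Y) * (X * A * Y)) ∧
    ((Y * A * X) * (Y * A ^ 2) * (Y * A * X) = Y * A * X ∧
     (Y * A ^ 2) * (Y * A * X) * (Y * A ^ 2) = Y * A ^ 2 ∧
     (Y * A * X) * (Y * A ^ 2) = (Y * A ^ 2) * (Y * A * X)) :=
  ⟨isGroupInverse_mul_mul_sq_mul hX1 hX3 hY1, isGroupInverse_mul_mul_mul_sq hX1 hX3 hY1⟩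

/-- `A²·Y` is a group inverse of the right core inverse `Z = X·A·Y`,
and `Y·A²` is a group inverse of the left core inverse `Z' = Y·A·X`. -/
theorem group_inverse_of_core_inverses {n : ℕ}
    (A X Y : Matrix (Fin n) (Fin n) (Quaternion ℝ))
    (hX1 : A * X * A = A) (hX2 : X * A * X = X) (hX3 : A * X = X * A)
    (hY1 : A * Y * A = A) (hY2 : Y * A * Y = Y)
    (hY3 : (A * Y).conjTranspose = A * Y) (hY4 : (Y * A).conjTranspose = Y * A) :
    ((X * A * Y) * (A ^ 2 * Y) * (X * A * Y) = X * A * Y ∧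
     (A ^ 2 * Y) * (X * A * Y) * (A ^ 2 * Y) = A ^ 2 * Y ∧
     (X * A * Y) * (A ^ 2 * Y) = (A ^ 2 * Y) * (X * A * Y)) ∧
    ((Y * A * X) * (Y * A ^ 2) * (Y * A * X) = Y * A * X ∧
     (Y * A ^ 2) * (Y * A * X) * (Y * A ^ 2) = Y * A ^ 2 ∧
     (Y * A * X) * (Y * A ^ 2) = (Y * A ^ 2) * (Y * A * X)) :=
  group_inverse_of_core_inverses_general A X Y hX1 hX3 hY1
end

section
/- Let A be an n×n quaternion matrix with group inverse X and Moore–Penrose inverse Y, and set Z := X·A·Y and Z' := Y·A·X. Then Z²·A = X and A·Z'² = X; that is, (A^⊕)² A = A^# and A (A_⊕)² = A^#. -/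
section Monoid

variable {M : Type*} [Monoid M] {a x y : M}

theorem rightCore_sq_mul_eq_groupInverse (hy : a * y * a = a) (hax : Commute a x)
    (hx : x * a * x = x) : (x * a * y) ^ 2 * a = x :=
  calc (x * a * y) ^ 2 * a = x * a * y * (x * (a * y * a)) := by simp only [sq, mul_assoc]
    _ = x * a * y * (a * x) := by rw [hy, hax.eq]
    _ = x * (a * y * a) * x := by simp only [mul_assoc]
    _ = x := by rw [hy, hx]

theorem mul_leftCore_sq_eq_groupInverse (hy : a * y * a = a) (hax : Commute a x)
    (hx : x * a * x = x) : a * (y * a * x) ^ 2 = x :=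
  calc a * (y * a * x) ^ 2 = a * y * a * x * (y * a * x) := by simp only [sq, mul_assoc]
    _ = a * x * (y * a * x) := by rw [hy]
    _ = x * (a * y * a) * x := by rw [hax.eq]; simp only [mul_assoc]
    _ = x := by rw [hy, hx]

end Monoid

theorem core_inverse_sq_eq_group_general {n : ℕ}
    (A X Y : Matrix (Fin n) (Fin n) (Quaternion ℝ))
    (hX2 : X * A * X = X) (hX3 : A * X = X * A)
    (hY1 : A * Y * A = A) :
    (X * A * Y) ^ 2 * A = X ∧ A * (Y * A * X) ^ 2 = X :=
  ⟨rightCore_sq_mul_eq_groupInverse hY1 hX3 hX2, mul_leftCore_sq_eq_groupInverse hY1 hX3 hX2⟩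

/-- `(A^⊕)²·A = A^#` and `A·(A_⊕)² = A^#` for a quaternion matrix `A`
with group inverse `X` and Moore–Penrose inverse `Y`. -/
theorem core_inverse_sq_eq_group {n : ℕ}
    (A X Y : Matrix (Fin n) (Fin n) (Quaternion ℝ))
    (hX1 : A * X * A = A) (hX2 : X * A * X = X) (hX3 : A * X = X * A)
    (hY1 : A * Y * A = A) (hY2 : Y * A * Y = Y)
    (hY3 : (A * Y).conjTranspose = A * Y) (hY4 : (Y * A).conjTranspose = Y * A) :
    (X * A * Y) ^ 2 * A = X ∧ A * (Y * A * X) ^ 2 = X :=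
  core_inverse_sq_eq_group_general A X Y hX2 hX3 hY1
end

section
/- Let A be an n×n quaternion matrix with group inverse X and Moore–Penrose inverse Y, and set Z := X·A·Y. For every positive integer m, if Y_m is a Moore–Penrose inverse of A^m, then Z^m = X^m·A^m·Y_m; that is, (A^⊕)^m = (A^m)^⊕ (note that X^m is a group inverse of A^m, so the right-hand side is the right core inverse of A^m). -/
/-!
Write `A^# = X` and `A^† = Y`. Because `X` commutes with `A`, the right core inverse satisfies
`(X A Y)^m = X^m (A Y)`, so it suffices to show `A Y = A^m Y_m`. Both sides are self-adjoint
idempotents, and `A` and `A^m` generate the same right ideal (`A^m = A A^{m-1}` and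
`A = A^m X^{m-1}`); two Hermitian projections onto the same right ideal coincide.
-/

section StarMonoid

variable {M : Type*} [Monoid M] [StarMul M]

theorem IsSelfAdjoint.eq_of_mul_eq_of_mul_eq {p q : M} (hp : IsSelfAdjoint p)
    (hq : IsSelfAdjoint q) (hpq : p * q = q) (hqp : q * p = p) : p = q :=
  calc p = q * p := hqp.symm
    _ = star (p * q) := by rw [star_mul, hp.star_eq, hq.star_eq]
    _ = q := by rw [hpq, hq.star_eq]

theorem mul_eq_mul_of_isSelfAdjoint_of_mul_mul_eq {a b y z c d : M}
    (hy : a * y * a = a) (hz : b * z * b = b)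
    (hay : IsSelfAdjoint (a * y)) (hbz : IsSelfAdjoint (b * z))
    (hb : b = a * c) (ha : a = b * d) : a * y = b * z := by
  refine hay.eq_of_mul_eq_of_mul_eq hbz ?_ ?_
  · rw [hb, ← mul_assoc, ← mul_assoc, hy]
  · conv_lhs => rw [ha]
    rw [← mul_assoc, ← mul_assoc, hz, ← ha]

end StarMonoid

section Monoid

variable {M : Type*} [Monoid M] {a x y : M}

theorem pow_succ_mul_pow_eq_self (hx : a * x * a = a) (hax : Commute a x) (k : ℕ) :
    a ^ (k + 1) * x ^ k = a := by
  have h : a * (a * x) = a := by rw [hax.eq, ← mul_assoc, hx]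
  induction k with
  | zero => simp
  | succ k ih =>
    calc a ^ (k + 2) * x ^ (k + 1) = a ^ (k + 1) * x ^ k * (a * x) := by
          rw [pow_succ a (k + 1), pow_succ x k, mul_assoc (a ^ (k + 1)), ← mul_assoc a,
            (hax.pow_right k).eq]
          simp only [mul_assoc]
      _ = a := by rw [ih, h]

theorem mul_mul_pow_succ (hy : a * y * a = a) (hax : Commute a x) (k : ℕ) :
    (x * a * y) ^ (k + 1) = x ^ (k + 1) * (a * y) := by
  induction k with
  | zero => rw [pow_one, pow_one, mul_assoc]
  | succ k ih =>
    have h : a * y * (x * a * y) = x * (a * y) := by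
      rw [← hax.eq, ← mul_assoc, ← mul_assoc, hy, hax.eq, mul_assoc]
    rw [pow_succ, ih, mul_assoc, h, ← mul_assoc, ← pow_succ]

end Monoid

theorem core_inverse_pow_general {n : ℕ}
    (A X Y : Matrix (Fin n) (Fin n) (Quaternion ℝ))
    (hX1 : A * X * A = A) (hX3 : A * X = X * A)
    (hY1 : A * Y * A = A)
    (hY3 : (A * Y).conjTranspose = A * Y)
    (m : ℕ) (hm : 0 < m) (Ym : Matrix (Fin n) (Fin n) (Quaternion ℝ))
    (hYm1 : A ^ m * Ym * A ^ m = A ^ m)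
    (hYm3 : (A ^ m * Ym).conjTranspose = A ^ m * Ym) :
    (X * A * Y) ^ m = X ^ m * A ^ m * Ym := by
  obtain ⟨k, rfl⟩ : ∃ k, m = k + 1 := ⟨m - 1, (Nat.succ_pred_eq_of_pos hm).symm⟩
  have hAX : Commute A X := hX3
  have hproj : A * Y = A ^ (k + 1) * Ym :=
    mul_eq_mul_of_isSelfAdjoint_of_mul_mul_eq hY1 hYm1 hY3 hYm3 (pow_succ' A k)
      (pow_succ_mul_pow_eq_self hX1 hAX k).symm
  rw [mul_mul_pow_succ hY1 hAX k, hproj, mul_assoc]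

/-- `(A^⊕)^m = (A^m)^⊕`: the `m`-th power of the right core inverse `X·A·Y`
equals `X^m·A^m·Y_m`, where `Y_m` is a Moore–Penrose inverse of `A^m`. -/
theorem core_inverse_pow {n : ℕ}
    (A X Y : Matrix (Fin n) (Fin n) (Quaternion ℝ))
    (hX1 : A * X * A = A) (hX2 : X * A * X = X) (hX3 : A * X = X * A)
    (hY1 : A * Y * A = A) (hY2 : Y * A * Y = Y)
    (hY3 : (A * Y).conjTranspose = A * Y) (hY4 : (Y * A).conjTranspose = Y * A)
    (m : ℕ) (hm : 0 < m) (Ym : Matrix (Fin n) (Fin n) (Quaternion ℝ))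
    (hYm1 : A ^ m * Ym * A ^ m = A ^ m) (hYm2 : Ym * A ^ m * Ym = Ym)
    (hYm3 : (A ^ m * Ym).conjTranspose = A ^ m * Ym)
    (hYm4 : (Ym * A ^ m).conjTranspose = Ym * A ^ m) :
    (X * A * Y) ^ m = X ^ m * A ^ m * Ym :=
  core_inverse_pow_general A X Y hX1 hX3 hY1 hY3 m hm Ym hYm1 hYm3
end

section
/- Let A be an n×n quaternion matrix possessing a Moore–Penrose inverse Y. Then there exists a matrix Z with A·Z = A·Y and R_r(Z) = R_r(A) (a right core inverse of A) if and only if A possesses a group inverse. -/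
noncomputable section RightCoreAux

local notation "Q" => Quaternion ℝ

private lemma single_decomp' {n : ℕ} (x : Fin n → Q) :
    x = ∑ j, (MulOpposite.op (x j)) • (Pi.single j 1 : Fin n → Q) := by
  funext i
  rw [Finset.sum_apply]
  simp [Pi.single_apply, MulOpposite.smul_eq_mul_unop, ite_mul]

instance qfinQ (n : ℕ) : Module.Finite Qᵐᵒᵖ (Fin n → Q) := by
  classical
  refine ⟨⟨Finset.univ.image (fun j : Fin n => (Pi.single j 1 : Fin n → Q)), ?_⟩⟩
  rw [Submodule.eq_top_iff']
  intro x
  rw [single_decomp' x]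
  apply Submodule.sum_mem
  intro j _
  apply Submodule.smul_mem
  apply Submodule.subset_span
  simp only [Finset.coe_image, Finset.coe_univ, Set.image_univ]
  exact ⟨j, rfl⟩

private def qToLin {n : ℕ} (M : Matrix (Fin n) (Fin n) Q) :
    (Fin n → Q) →ₗ[Qᵐᵒᵖ] (Fin n → Q) where
  toFun := M.mulVec
  map_add' x y := Matrix.mulVec_add M x y
  map_smul' c x := by
    show M.mulVec (c • x) = c • M.mulVec x
    funext i
    simp only [Matrix.mulVec, dotProduct, Pi.smul_apply,
      MulOpposite.smul_eq_mul_unop, Finset.sum_mul, mul_assoc]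

private lemma qToLin_apply {n : ℕ} (M : Matrix (Fin n) (Fin n) Q) (x : Fin n → Q) :
    qToLin M x = M.mulVec x := rfl

private lemma qToLin_mul {n : ℕ} (M N : Matrix (Fin n) (Fin n) Q) :
    qToLin (M * N) = qToLin M ∘ₗ qToLin N := by
  apply LinearMap.ext; intro x
  simp [qToLin_apply, Matrix.mulVec_mulVec]

private lemma qToLin_inj {n : ℕ} {M N : Matrix (Fin n) (Fin n) Q}
    (h : qToLin M = qToLin N) : M = N := by
  refine Matrix.ext fun i j => ?_
  have := congrArg (fun f => (f : (Fin n → Q) →ₗ[Qᵐᵒᵖ] (Fin n → Q)) (Pi.single j 1) i) h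
  simpa [qToLin_apply, Matrix.mulVec_single] using this

private def qOfLin {n : ℕ} (g : (Fin n → Q) →ₗ[Qᵐᵒᵖ] (Fin n → Q)) :
    Matrix (Fin n) (Fin n) Q := fun i j => g (Pi.single j 1) i

private lemma qToLin_qOfLin {n : ℕ} (g : (Fin n → Q) →ₗ[Qᵐᵒᵖ] (Fin n → Q)) :
    qToLin (qOfLin g) = g := by
  apply LinearMap.ext; intro x
  conv_rhs => rw [single_decomp' x]
  rw [map_sum]
  funext i
  rw [Finset.sum_apply]
  simp [qToLin_apply, Matrix.mulVec, dotProduct, qOfLin,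
    MulOpposite.smul_eq_mul_unop]

private theorem exists_group_inverse_linmap {K V : Type*} [DivisionRing K] [AddCommGroup V]
    [Module K V] [FiniteDimensional K V] (f : V →ₗ[K] V)
    (h : LinearMap.range (f ∘ₗ f) = LinearMap.range f) :
    ∃ g : V →ₗ[K] V, f ∘ₗ g ∘ₗ f = f ∧ g ∘ₗ f ∘ₗ g = g ∧ f ∘ₗ g = g ∘ₗ f := by
  set Rg := LinearMap.range f with hRg
  set Kr := LinearMap.ker f with hKr
  have hmaps : ∀ x ∈ Rg, f x ∈ Rg := fun x _ => LinearMap.mem_range_self f x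
  set f' : Rg →ₗ[K] Rg := f.restrict hmaps with hf'
  have hsurj : Function.Surjective f' := by
    rintro ⟨y, hy⟩
    rw [← h] at hy
    obtain ⟨x, hx⟩ := hy
    refine ⟨⟨f x, LinearMap.mem_range_self f x⟩, ?_⟩
    apply Subtype.ext
    simpa [hf', LinearMap.restrict_apply] using hx
  have hinj : Function.Injective f' := LinearMap.injective_iff_surjective.mpr hsurj
  set e : Rg ≃ₗ[K] Rg := LinearEquiv.ofBijective f' ⟨hinj, hsurj⟩ with he
  have hdisj : Disjoint Rg Kr := by
    rw [Submodule.disjoint_def]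
    intro x hxR hxK
    have h0 : f' ⟨x, hxR⟩ = 0 := by
      apply Subtype.ext
      simpa [hf', hKr, LinearMap.restrict_apply] using hxK
    have := hinj (a₁ := ⟨x, hxR⟩) (a₂ := 0) (by simpa using h0)
    simpa using congrArg Subtype.val this
  have hcodis : Codisjoint Rg Kr := by
    rw [codisjoint_iff]
    apply Submodule.eq_top_of_finrank_eq
    have h1 := Submodule.finrank_sup_add_finrank_inf_eq Rg Kr
    have h2 : Rg ⊓ Kr = ⊥ := disjoint_iff.mp hdisj
    rw [h2] at h1
    rw [finrank_bot, add_zero] at h1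
    rw [h1]
    exact LinearMap.finrank_range_add_finrank_ker f
  have hc : IsCompl Rg Kr := ⟨hdisj, hcodis⟩
  set π : V →ₗ[K] Rg := Rg.projectionOnto Kr hc with hπ
  set g : V →ₗ[K] V := Rg.subtype ∘ₗ (e.symm : Rg →ₗ[K] Rg) ∘ₗ π with hg
  have keyA : ∀ u : Rg, f ((e.symm u : Rg) : V) = (u : V) := by
    intro u
    have h1 : f' (e.symm u) = e (e.symm u) := rfl
    have h2 : (f' (e.symm u) : V) = f ((e.symm u : Rg) : V) := by
      simp [hf', LinearMap.restrict_apply]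
    rw [← h2, h1, e.apply_symm_apply]
  have keyB : ∀ v : Rg, π (v : V) = v := fun v =>
    Submodule.projectionOnto_apply_left hc v
  have keyC : ∀ x : V, f x = f ((π x : Rg) : V) := by
    intro x
    have hker : x - ((π x : Rg) : V) ∈ Kr := by
      rw [← Submodule.ker_projectionOnto (p := Rg) (q := Kr) hc]
      rw [LinearMap.mem_ker, map_sub, keyB (π x), sub_self]
    have h3 : f (x - ((π x : Rg) : V)) = 0 := hker
    rw [map_sub, sub_eq_zero] at h3
    exact h3
  have hfg : ∀ x : V, f (g x) = ((π x : Rg) : V) := by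
    intro x
    simp only [hg, LinearMap.comp_apply, Submodule.coe_subtype, LinearEquiv.coe_coe]
    exact keyA (π x)
  refine ⟨g, ?_, ?_, ?_⟩
  · apply LinearMap.ext; intro x
    simp only [LinearMap.comp_apply]
    rw [hfg (f x)]
    have : π (f x) = ⟨f x, LinearMap.mem_range_self f x⟩ :=
      keyB ⟨f x, LinearMap.mem_range_self f x⟩
    rw [this]
  · apply LinearMap.ext; intro x
    simp only [LinearMap.comp_apply]
    rw [hfg x]
    simp only [hg, LinearMap.comp_apply, Submodule.coe_subtype, LinearEquiv.coe_coe]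
    rw [keyB (π x)]
  · apply LinearMap.ext; intro x
    simp only [LinearMap.comp_apply]
    rw [hfg x]
    simp only [hg, LinearMap.comp_apply, Submodule.coe_subtype, LinearEquiv.coe_coe]
    have h1 : π (f x) = ⟨f x, LinearMap.mem_range_self f x⟩ :=
      keyB ⟨f x, LinearMap.mem_range_self f x⟩
    rw [h1]
    have h2 : e (π x) = ⟨f x, LinearMap.mem_range_self f x⟩ := by
      apply Subtype.ext
      have h4 : (e (π x) : V) = f ((π x : Rg) : V) := by
        simp [he, hf', LinearEquiv.ofBijective_apply, LinearMap.restrict_apply]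
      rw [h4]
      exact (keyC x).symm
    rw [← h2, e.symm_apply_apply]

end RightCoreAux

/-- A quaternion matrix `A` with Moore–Penrose inverse `Y` has a right core
inverse if and only if it has a group inverse. -/
theorem right_core_exists_iff_group_exists {n : ℕ}
    (A Y : Matrix (Fin n) (Fin n) (Quaternion ℝ))
    (hY1 : A * Y * A = A) (hY2 : Y * A * Y = Y)
    (hY3 : (A * Y).conjTranspose = A * Y) (hY4 : (Y * A).conjTranspose = Y * A) :
    (∃ Z : Matrix (Fin n) (Fin n) (Quaternion ℝ),
      A * Z = A * Y ∧
      {y : Fin n → Quaternion ℝ | ∃ x, Z.mulVec x = y} =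
        {y : Fin n → Quaternion ℝ | ∃ x, A.mulVec x = y}) ↔
    (∃ X : Matrix (Fin n) (Fin n) (Quaternion ℝ),
      A * X * A = A ∧ X * A * X = X ∧ A * X = X * A) := by
  constructor
  · rintro ⟨Z, hAZ, hset⟩
    have hAZA : A * Z * A = A := by rw [hAZ, hY1]
    set f := qToLin A with hf
    have hr : LinearMap.range (f ∘ₗ f) = LinearMap.range f := by
      apply le_antisymm
      · rintro y ⟨x, rfl⟩
        exact ⟨f x, rfl⟩

      · rintro y ⟨x, rfl⟩
        -- f x = A.mulVec x ; use A = A*Z*A and range Z = range A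
        have hz : Z.mulVec (A.mulVec x) ∈
            {y : Fin n → Quaternion ℝ | ∃ x, A.mulVec x = y} := by
          rw [← hset]
          exact ⟨A.mulVec x, rfl⟩
        obtain ⟨u, hu⟩ := hz
        refine ⟨u, ?_⟩
        show (f ∘ₗ f) u = f x
        simp only [LinearMap.comp_apply, hf, qToLin_apply]
        rw [hu, Matrix.mulVec_mulVec, Matrix.mulVec_mulVec, hAZA]
    obtain ⟨g, hg1, hg2, hg3⟩ := exists_group_inverse_linmap f hr
    refine ⟨qOfLin g, ?_, ?_, ?_⟩
    · apply qToLin_inj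
      rw [qToLin_mul, qToLin_mul, qToLin_qOfLin, ← hf, LinearMap.comp_assoc]
      exact hg1
    · apply qToLin_inj
      rw [qToLin_mul, qToLin_mul, qToLin_qOfLin, ← hf, LinearMap.comp_assoc]
      exact hg2
    · apply qToLin_inj
      rw [qToLin_mul, qToLin_mul, qToLin_qOfLin, ← hf]
      exact hg3
  · rintro ⟨X, hX1, hX2, hX3⟩
    have hX5 : A * X * X = X := by rw [hX3]; exact hX2
    have hXA : X * A * A = A := by rw [← hX3]; exact hX1
    refine ⟨X * A * Y, ?_, ?_⟩
    · calc A * (X * A * Y) = (A * X * A) * Y := by simp only [Matrix.mul_assoc]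
        _ = A * Y := by rw [hX1]
    · ext y
      constructor
      · rintro ⟨x, rfl⟩
        refine ⟨(X * X * A * Y).mulVec x, ?_⟩
        rw [Matrix.mulVec_mulVec]
        have hEq : A * (X * X * A * Y) = X * A * Y := by
          calc A * (X * X * A * Y) = ((A * X * X) * A) * Y := by simp only [Matrix.mul_assoc]
            _ = X * A * Y := by rw [hX5]
        rw [hEq]
      · rintro ⟨x, rfl⟩
        refine ⟨(A * A).mulVec x, ?_⟩
        rw [Matrix.mulVec_mulVec]
        have hEq : X * A * Y * (A * A) = A := by
          calc X * A * Y * (A * A) = X * ((A * Y * A) * A) := by simp only [Matrix.mul_assoc]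
            _ = X * (A * A) := by rw [hY1]
            _ = A := by rw [← Matrix.mul_assoc]; exact hXA
        rw [hEq]
end

section
/- Let A be an n×n quaternion matrix with Moore–Penrose inverse Y. If Z₁ and Z₂ are two matrices each satisfying A·Zᵢ = A·Y and R_r(Zᵢ) = R_r(A) (i = 1, 2), then Z₁ = Z₂; that is, the right core inverse of a quaternion matrix, when it exists, is unique. -/
/-!
From `A Z₂ = A Y` and `A Y A = A` we get `A Z₂ A = A`, and since the columns of `Z₂` lie in the
right column space of `A`, every `A x = A (Z₂ A x)` lies in the right column space of `A²`.
So `A` maps its right column space onto itself; this space is a finitely generated module over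
`ℍᵐᵒᵖ`, hence Noetherian, and a surjective endomorphism of a Noetherian module is injective
(Orzech). Now `Z₁ x` and `Z₂ x` both lie in that space and have the same image `A Y x` under `A`,
so `Z₁ x = Z₂ x` for all `x`.
-/

/-- Right multiplication makes a ring a cyclic module over its opposite. -/
instance Module.Finite.mulOpposite_self (R : Type*) [Semiring R] : Module.Finite Rᵐᵒᵖ R :=
  .equiv (MulOpposite.opLinearEquiv Rᵐᵒᵖ).symm

namespace LinearMap

variable {R M : Type*} [Ring R] [AddCommGroup M] [Module R M] [IsNoetherian R M]

theorem injOn_range_of_range_le_range_comp_self {f : M →ₗ[R] M}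
    (h : range f ≤ range (f ∘ₗ f)) : Set.InjOn f (range f) := by
  let g : range f →ₗ[R] range f := f.restrict fun x _ ↦ mem_range_self f x
  have hg : Function.Surjective g := by
    rintro ⟨y, hy⟩
    obtain ⟨w, rfl⟩ := h hy
    exact ⟨⟨f w, mem_range_self f w⟩, rfl⟩
  intro u hu v hv huv
  exact congrArg Subtype.val <|
    IsNoetherian.injective_of_surjective_endomorphism g hg (a₁ := ⟨u, hu⟩) (a₂ := ⟨v, hv⟩)
      (Subtype.ext huv)

end LinearMap

namespace Matrix

variable {n R : Type*} [Fintype n]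

theorem range_mulVec_subset_range_mulVec_mul_self [Semiring R] {A Z : Matrix n n R}
    (hAZA : A * Z * A = A) (hZ : Set.range Z.mulVec ⊆ Set.range A.mulVec) :
    Set.range A.mulVec ⊆ Set.range (A * A).mulVec := by
  rintro _ ⟨x, rfl⟩
  obtain ⟨w, hw⟩ := hZ ⟨A *ᵥ x, rfl⟩
  refine ⟨w, ?_⟩
  rw [← mulVec_mulVec, hw, mulVec_mulVec, mulVec_mulVec, hAZA]

theorem mulVec_injOn_range_of_range_subset_range_mul_self [Ring R] [IsNoetherianRing Rᵐᵒᵖ]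
    {A : Matrix n n R} (h : Set.range A.mulVec ⊆ Set.range (A * A).mulVec) :
    Set.InjOn A.mulVec (Set.range A.mulVec) := by
  refine LinearMap.injOn_range_of_range_le_range_comp_self (f := mulVecBilin R Rᵐᵒᵖ A) ?_
  rintro _ ⟨x, rfl⟩
  obtain ⟨w, hw⟩ := h ⟨x, rfl⟩
  exact ⟨w, by simp [← hw, mulVec_mulVec]⟩

theorem eq_of_mul_eq_mul_of_range_mulVec_subset [Semiring R] {A Z₁ Z₂ : Matrix n n R}
    (hA : Set.InjOn A.mulVec (Set.range A.mulVec)) (h : A * Z₁ = A * Z₂)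
    (h₁ : Set.range Z₁.mulVec ⊆ Set.range A.mulVec)
    (h₂ : Set.range Z₂.mulVec ⊆ Set.range A.mulVec) : Z₁ = Z₂ :=
  ext_iff_mulVec.2 fun x ↦
    hA (h₁ ⟨x, rfl⟩) (h₂ ⟨x, rfl⟩) (by rw [mulVec_mulVec, mulVec_mulVec, h])

end Matrix

open Matrix in
theorem right_core_inverse_unique_general {n : ℕ}
    (A Y Z₁ Z₂ : Matrix (Fin n) (Fin n) (Quaternion ℝ))
    (hY1 : A * Y * A = A)
    (hZ₁ : A * Z₁ = A * Y)
    (hR₁ : {y : Fin n → Quaternion ℝ | ∃ x, Z₁.mulVec x = y} =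
      {y : Fin n → Quaternion ℝ | ∃ x, A.mulVec x = y})
    (hZ₂ : A * Z₂ = A * Y)
    (hR₂ : {y : Fin n → Quaternion ℝ | ∃ x, Z₂.mulVec x = y} =
      {y : Fin n → Quaternion ℝ | ∃ x, A.mulVec x = y}) :
    Z₁ = Z₂ := by
  have hAZA : A * Z₂ * A = A := by rw [hZ₂, hY1]
  have hA : Set.InjOn A.mulVec (Set.range A.mulVec) :=
    mulVec_injOn_range_of_range_subset_range_mul_self
      (range_mulVec_subset_range_mulVec_mul_self hAZA hR₂.subset)
  exact eq_of_mul_eq_mul_of_range_mulVec_subset hA (hZ₁.trans hZ₂.symm) hR₁.subset hR₂.subset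

/-- The right core inverse of a quaternion matrix, when it exists, is unique. -/
theorem right_core_inverse_unique {n : ℕ}
    (A Y Z₁ Z₂ : Matrix (Fin n) (Fin n) (Quaternion ℝ))
    (hY1 : A * Y * A = A) (hY2 : Y * A * Y = Y)
    (hY3 : (A * Y).conjTranspose = A * Y) (hY4 : (Y * A).conjTranspose = Y * A)
    (hZ₁ : A * Z₁ = A * Y)
    (hR₁ : {y : Fin n → Quaternion ℝ | ∃ x, Z₁.mulVec x = y} =
      {y : Fin n → Quaternion ℝ | ∃ x, A.mulVec x = y})
    (hZ₂ : A * Z₂ = A * Y)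
    (hR₂ : {y : Fin n → Quaternion ℝ | ∃ x, Z₂.mulVec x = y} =
      {y : Fin n → Quaternion ℝ | ∃ x, A.mulVec x = y}) :
    Z₁ = Z₂ :=
  right_core_inverse_unique_general A Y Z₁ Z₂ hY1 hZ₁ hR₁ hZ₂ hR₂
end

section
/- Let A be an n×n quaternion matrix, let k ≥ 1 be an integer, let D be a Drazin inverse of A with index k, and let Y be a Moore–Penrose inverse of A^{k+1}. Then the matrix T := A^k·Y satisfies T·A·T = T, (A·T)* = A·T, T·A^{k+1} = A^k, and R_r(T) = R_r(D); that is, A^k (A^{k+1})† is the right core-EP inverse of A. -/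
/-!
Everything except the range equality is a one-line consequence of the Moore–Penrose and Drazin
equations. For the ranges, `T = D·(A^{k+1}Y)` because `D A^{k+1} = A^k`, and conversely
`D = D^{k+1} A^k = A^k D^{k+1} = T A^{k+1} D^{k+1}`, so each of `T`, `D` is a right multiple of the
other.
-/

section Monoid

variable {M : Type*} [Monoid M] {a d y : M}

theorem pow_succ_mul_pow_of_drazin (hc : Commute a d) (hd : d * a * d = d) (m : ℕ) :
    d ^ (m + 1) * a ^ m = d := by
  have hdda : d * d * a = d := by rw [mul_assoc, ← hc.eq, ← mul_assoc, hd]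
  induction m with
  | zero => simp
  | succ m ih =>
    calc d ^ (m + 1 + 1) * a ^ (m + 1)
        = d ^ m * (d * d * a) * a ^ m := by
          rw [pow_succ d (m + 1), pow_succ d m, pow_succ' a m]
          simp only [mul_assoc]
      _ = d := by rw [hdda, ← pow_succ, ih]

theorem pow_mul_mul_pow_succ_eq_pow (k : ℕ) (hd : d * a ^ (k + 1) = a ^ k)
    (hy : a ^ (k + 1) * y * a ^ (k + 1) = a ^ (k + 1)) :
    a ^ k * y * a ^ (k + 1) = a ^ k := by
  calc a ^ k * y * a ^ (k + 1)
      = d * (a ^ (k + 1) * y * a ^ (k + 1)) := by rw [← hd]; simp only [mul_assoc]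
    _ = a ^ k := by rw [hy, hd]

theorem pow_mul_mul_mul_pow_mul_eq_self (k : ℕ) (hy : y * a ^ (k + 1) * y = y) :
    a ^ k * y * a * (a ^ k * y) = a ^ k * y := by
  calc a ^ k * y * a * (a ^ k * y)
      = a ^ k * (y * a ^ (k + 1) * y) := by rw [pow_succ' a k]; simp only [mul_assoc]
    _ = a ^ k * y := by rw [hy]

end Monoid

theorem Matrix.range_mulVec_subset_of_eq_mul {R m n o : Type*} [NonUnitalSemiring R]
    [Fintype n] [Fintype o] {P : Matrix m o R} (N : Matrix m n R) (Q : Matrix n o R)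
    (h : P = N * Q) : Set.range P.mulVec ⊆ Set.range N.mulVec := by
  rintro _ ⟨x, rfl⟩
  exact ⟨Q.mulVec x, by rw [Matrix.mulVec_mulVec, h]⟩

theorem right_core_EP_inverse_general {n : ℕ} (k : ℕ)
    (A D Y : Matrix (Fin n) (Fin n) (Quaternion ℝ))
    (hD1 : A * D = D * A) (hD2 : D * A * D = D) (hD3 : D * A ^ (k + 1) = A ^ k)
    (hY1 : A ^ (k + 1) * Y * A ^ (k + 1) = A ^ (k + 1))
    (hY2 : Y * A ^ (k + 1) * Y = Y)
    (hY3 : (A ^ (k + 1) * Y).conjTranspose = A ^ (k + 1) * Y) :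
    (A ^ k * Y) * A * (A ^ k * Y) = A ^ k * Y ∧
    (A * (A ^ k * Y)).conjTranspose = A * (A ^ k * Y) ∧
    (A ^ k * Y) * A ^ (k + 1) = A ^ k ∧
    {y : Fin n → Quaternion ℝ | ∃ x, (A ^ k * Y).mulVec x = y} =
      {y : Fin n → Quaternion ℝ | ∃ x, D.mulVec x = y} := by
  have hT : A ^ k * Y * A ^ (k + 1) = A ^ k := pow_mul_mul_pow_succ_eq_pow k hD3 hY1
  have hAT : A * (A ^ k * Y) = A ^ (k + 1) * Y := by rw [← mul_assoc, ← pow_succ']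
  have hT_eq : A ^ k * Y = D * (A ^ (k + 1) * Y) := by rw [← mul_assoc, hD3]
  have hD_eq : D = A ^ k * Y * (A ^ (k + 1) * D ^ (k + 1)) := by
    rw [← mul_assoc, hT, (Commute.pow_pow hD1 k (k + 1)).eq,
      pow_succ_mul_pow_of_drazin hD1 hD2]
  refine ⟨pow_mul_mul_mul_pow_mul_eq_self k hY2, hAT ▸ hY3, hT, ?_⟩
  exact (Matrix.range_mulVec_subset_of_eq_mul _ _ hT_eq).antisymm
    (Matrix.range_mulVec_subset_of_eq_mul _ _ hD_eq)

/-- `A^k·(A^{k+1})†` is the right core-EP inverse of a quaternion matrix `A`: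
with `D` the Drazin inverse of `A` of index `k` and `Y` a Moore–Penrose inverse
of `A^{k+1}`, the matrix `T = A^k·Y` satisfies `T·A·T = T`, `(A·T)* = A·T`,
`T·A^{k+1} = A^k`, and `R_r(T) = R_r(D)`. -/
theorem right_core_EP_inverse {n : ℕ} (k : ℕ) (hk : 1 ≤ k)
    (A D Y : Matrix (Fin n) (Fin n) (Quaternion ℝ))
    (hD1 : A * D = D * A) (hD2 : D * A * D = D) (hD3 : D * A ^ (k + 1) = A ^ k)
    (hY1 : A ^ (k + 1) * Y * A ^ (k + 1) = A ^ (k + 1))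
    (hY2 : Y * A ^ (k + 1) * Y = Y)
    (hY3 : (A ^ (k + 1) * Y).conjTranspose = A ^ (k + 1) * Y)
    (hY4 : (Y * A ^ (k + 1)).conjTranspose = Y * A ^ (k + 1)) :
    (A ^ k * Y) * A * (A ^ k * Y) = A ^ k * Y ∧
    (A * (A ^ k * Y)).conjTranspose = A * (A ^ k * Y) ∧
    (A ^ k * Y) * A ^ (k + 1) = A ^ k ∧
    {y : Fin n → Quaternion ℝ | ∃ x, (A ^ k * Y).mulVec x = y} =
      {y : Fin n → Quaternion ℝ | ∃ x, D.mulVec x = y} :=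
  right_core_EP_inverse_general k A D Y hD1 hD2 hD3 hY1 hY2 hY3
end

section
/- Let A be an n×n quaternion matrix, let k ≥ 1 be an integer, let D be a Drazin inverse of A with index k, and let Y be a Moore–Penrose inverse of A^{k+1}. Then the matrix S := Y·A^k satisfies S·A·S = S, (S·A)* = S·A, A^{k+1}·S = A^k, and R_l(S) = R_l(D); that is, (A^{k+1})† A^k is the left core-EP inverse of A. -/
/-!
Write `S = Y A^k`. Since `D` commutes with `A`, the Drazin equation reads `A^{k+1} D = A^k`, so
`A^k` lies in the right ideal of `A^{k+1}` and `A^{k+1} Y A^{k+1} = A^{k+1}` gives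
`A^{k+1} S = A^k`. The other two equations are those of the Moore–Penrose inverse `Y`, since
`S A = Y A^{k+1}`. For the row spaces, `S = (Y A^{k+1}) D` and `D = D^{k+1} A^k = D^{k+1} A^{k+1} S`.
-/

open Matrix

theorem Commute.pow_succ_mul_pow_eq_self {M : Type*} [Monoid M] {a d : M} (hc : Commute a d)
    (hd : d * a * d = d) (j : ℕ) : d ^ (j + 1) * a ^ j = d := by
  induction j with
  | zero => simp
  | succ j ih =>
    calc d ^ (j + 1 + 1) * a ^ (j + 1) = d * (d ^ (j + 1) * a ^ j) * a := by
          rw [pow_succ' d, pow_succ a]; simp only [mul_assoc]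
      _ = d * (a * d) := by rw [ih, hc.eq, mul_assoc]
      _ = d := by rw [← mul_assoc, hd]

theorem Matrix.range_vecMul_subset_of_eq_mul {m n R : Type*} [Fintype m] [NonUnitalSemiring R]
    {M N : Matrix m n R} (P : Matrix m m R) (h : M = P * N) :
    Set.range (· ᵥ* M) ⊆ Set.range (· ᵥ* N) := by
  rintro _ ⟨x, rfl⟩
  exact ⟨x ᵥ* P, by simp only [h, vecMul_vecMul]⟩

theorem left_core_EP_inverse_general {n : ℕ} (k : ℕ)
    (A D Y : Matrix (Fin n) (Fin n) (Quaternion ℝ))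
    (hD1 : A * D = D * A) (hD2 : D * A * D = D) (hD3 : D * A ^ (k + 1) = A ^ k)
    (hY1 : A ^ (k + 1) * Y * A ^ (k + 1) = A ^ (k + 1))
    (hY2 : Y * A ^ (k + 1) * Y = Y)
    (hY4 : (Y * A ^ (k + 1)).conjTranspose = Y * A ^ (k + 1)) :
    (Y * A ^ k) * A * (Y * A ^ k) = Y * A ^ k ∧
    ((Y * A ^ k) * A).conjTranspose = (Y * A ^ k) * A ∧
    A ^ (k + 1) * (Y * A ^ k) = A ^ k ∧
    {y : Fin n → Quaternion ℝ | ∃ x, Matrix.vecMul x (Y * A ^ k) = y} =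
      {y : Fin n → Quaternion ℝ | ∃ x, Matrix.vecMul x D = y} := by
  have hc : Commute A D := hD1
  have hSA : Y * A ^ k * A = Y * A ^ (k + 1) := by rw [mul_assoc, ← pow_succ]
  have hAD : A ^ (k + 1) * D = A ^ k := (hc.pow_left (k + 1)).eq.trans hD3
  have hAS : A ^ (k + 1) * (Y * A ^ k) = A ^ k := by
    rw [← hAD, ← mul_assoc, ← mul_assoc, hY1]
  have hS : Y * A ^ k = (Y * A ^ (k + 1)) * D := by rw [mul_assoc, hAD]
  have hD : D = (D ^ (k + 1) * A ^ (k + 1)) * (Y * A ^ k) := by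
    rw [mul_assoc, hAS, hc.pow_succ_mul_pow_eq_self hD2]
  refine ⟨?_, ?_, hAS, ?_⟩
  · rw [hSA, ← mul_assoc, hY2]
  · rw [hSA, hY4]
  · exact (range_vecMul_subset_of_eq_mul _ hS).antisymm (range_vecMul_subset_of_eq_mul _ hD)

/-- `(A^{k+1})†·A^k` is the left core-EP inverse of a quaternion matrix `A`:
with `D` the Drazin inverse of `A` of index `k` and `Y` a Moore–Penrose inverse
of `A^{k+1}`, the matrix `S = Y·A^k` satisfies `S·A·S = S`, `(S·A)* = S·A`,
`A^{k+1}·S = A^k`, and `R_l(S) = R_l(D)`. -/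
theorem left_core_EP_inverse {n : ℕ} (k : ℕ) (hk : 1 ≤ k)
    (A D Y : Matrix (Fin n) (Fin n) (Quaternion ℝ))
    (hD1 : A * D = D * A) (hD2 : D * A * D = D) (hD3 : D * A ^ (k + 1) = A ^ k)
    (hY1 : A ^ (k + 1) * Y * A ^ (k + 1) = A ^ (k + 1))
    (hY2 : Y * A ^ (k + 1) * Y = Y)
    (hY3 : (A ^ (k + 1) * Y).conjTranspose = A ^ (k + 1) * Y)
    (hY4 : (Y * A ^ (k + 1)).conjTranspose = Y * A ^ (k + 1)) :
    (Y * A ^ k) * A * (Y * A ^ k) = Y * A ^ k ∧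
    ((Y * A ^ k) * A).conjTranspose = (Y * A ^ k) * A ∧
    A ^ (k + 1) * (Y * A ^ k) = A ^ k ∧
    {y : Fin n → Quaternion ℝ | ∃ x, Matrix.vecMul x (Y * A ^ k) = y} =
      {y : Fin n → Quaternion ℝ | ∃ x, Matrix.vecMul x D = y} :=
  left_core_EP_inverse_general k A D Y hD1 hD2 hD3 hY1 hY2 hY4
end

section
/- Let A be an n×n quaternion matrix with group inverse X and Moore–Penrose inverse Y, and let Y₂ be a Moore–Penrose inverse of A². Then X·A·Y = A·Y₂ and Y·A·X = Y₂·A; that is, when Ind A ≤ 1 the right core inverse equals A(A²)† and the left core inverse equals (A²)†A. -/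
/-! When `A` has a group inverse, `A` and `A²` have the same range and the same row space, so
`A A†` and `A² (A²)†` are the orthogonal projectors onto one subspace, and likewise `A† A` and
`(A²)† A²`. Hence `X A A† = X A² (A²)† = A (A²)†`, since `X A² = A`; the left core inverse is dual. -/

section StarMonoid

variable {R : Type*} [Monoid R] [StarMul R]

theorem IsSelfAdjoint.eq_of_mul_eq_of_mul_eq_s13 {P Q : R} (hP : IsSelfAdjoint P)
    (hQ : IsSelfAdjoint Q) (hPQ : P * Q = Q) (hQP : Q * P = P) : P = Q :=
  calc P = Q * P := hQP.symm
    _ = star (P * Q) := by rw [star_mul, hP.star_eq, hQ.star_eq]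
    _ = Q := by rw [hPQ, hQ.star_eq]

theorem mul_eq_mul_of_isSelfAdjoint_of_dvd {A B Y Z : R} (hY : A * Y * A = A)
    (hZ : B * Z * B = B) (hAY : IsSelfAdjoint (A * Y)) (hBZ : IsSelfAdjoint (B * Z))
    (hBA : B ∣ A) (hAB : A ∣ B) : A * Y = B * Z := by
  obtain ⟨W, hW⟩ := hBA
  obtain ⟨V, hV⟩ := hAB
  refine hAY.eq_of_mul_eq_of_mul_eq_s13 hBZ ?_ ?_
  · calc A * Y * (B * Z) = A * Y * A * V * Z := by rw [hV]; simp only [mul_assoc]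
      _ = B * Z := by rw [hY, hV]
  · calc B * Z * (A * Y) = B * Z * B * W * Y := by rw [hW]; simp only [mul_assoc]
      _ = A * Y := by rw [hZ, hW]

theorem mul_eq_mul_of_isSelfAdjoint_of_eq_mul {A B Y Z W V : R} (hY : A * Y * A = A)
    (hZ : B * Z * B = B) (hYA : IsSelfAdjoint (Y * A)) (hZB : IsSelfAdjoint (Z * B))
    (hA : A = W * B) (hB : B = V * A) : Y * A = Z * B := by
  apply star_injective
  rw [star_mul, star_mul]
  refine mul_eq_mul_of_isSelfAdjoint_of_dvd (Y := star Y) (Z := star Z) ?_ ?_ ?_ ?_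
    ⟨star W, by rw [hA, star_mul]⟩ ⟨star V, by rw [hB, star_mul]⟩
  · simpa only [star_mul, mul_assoc] using congrArg star hY
  · simpa only [star_mul, mul_assoc] using congrArg star hZ
  · simpa only [star_mul] using IsSelfAdjoint.star_iff.mpr hYA
  · simpa only [star_mul] using IsSelfAdjoint.star_iff.mpr hZB

end StarMonoid

section Monoid

variable {M : Type*} [Monoid M]

theorem Commute.sq_mul_eq_of_mul_mul_eq {A X : M} (hc : Commute A X) (h : A * X * A = A) :
    A ^ 2 * X = A := by
  rw [sq, mul_assoc, hc.eq, ← mul_assoc, h]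

theorem Commute.mul_sq_eq_of_mul_mul_eq {A X : M} (hc : Commute A X) (h : A * X * A = A) :
    X * A ^ 2 = A := by
  rw [sq, ← mul_assoc, ← hc.eq, h]

end Monoid

theorem core_inverse_simple_rep_general {n : ℕ}
    (A X Y Y₂ : Matrix (Fin n) (Fin n) (Quaternion ℝ))
    (hX1 : A * X * A = A) (hX3 : A * X = X * A)
    (hY1 : A * Y * A = A)
    (hY3 : (A * Y).conjTranspose = A * Y) (hY4 : (Y * A).conjTranspose = Y * A)
    (hY₂1 : A ^ 2 * Y₂ * A ^ 2 = A ^ 2)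
    (hY₂3 : (A ^ 2 * Y₂).conjTranspose = A ^ 2 * Y₂)
    (hY₂4 : (Y₂ * A ^ 2).conjTranspose = Y₂ * A ^ 2) :
    X * A * Y = A * Y₂ ∧ Y * A * X = Y₂ * A := by
  have hA2X : A ^ 2 * X = A := Commute.sq_mul_eq_of_mul_mul_eq hX3 hX1
  have hXA2 : X * A ^ 2 = A := Commute.mul_sq_eq_of_mul_mul_eq hX3 hX1
  have hright : A * Y = A ^ 2 * Y₂ :=
    mul_eq_mul_of_isSelfAdjoint_of_dvd hY1 hY₂1 hY3 hY₂3 ⟨X, hA2X.symm⟩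
      (dvd_pow_self A two_ne_zero)
  have hleft : Y * A = Y₂ * A ^ 2 :=
    mul_eq_mul_of_isSelfAdjoint_of_eq_mul hY1 hY₂1 hY4 hY₂4 hXA2.symm (sq A)
  constructor
  · rw [mul_assoc, hright, ← mul_assoc, hXA2]
  · rw [hleft, mul_assoc, hA2X]

/-- For a quaternion group matrix `A` (with group inverse `X`, Moore–Penrose
inverse `Y`, and `Y₂` a Moore–Penrose inverse of `A²`) the right core inverse
equals `A·(A²)†` and the left core inverse equals `(A²)†·A`. -/
theorem core_inverse_simple_rep {n : ℕ}
    (A X Y Y₂ : Matrix (Fin n) (Fin n) (Quaternion ℝ))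
    (hX1 : A * X * A = A) (hX2 : X * A * X = X) (hX3 : A * X = X * A)
    (hY1 : A * Y * A = A) (hY2 : Y * A * Y = Y)
    (hY3 : (A * Y).conjTranspose = A * Y) (hY4 : (Y * A).conjTranspose = Y * A)
    (hY₂1 : A ^ 2 * Y₂ * A ^ 2 = A ^ 2) (hY₂2 : Y₂ * A ^ 2 * Y₂ = Y₂)
    (hY₂3 : (A ^ 2 * Y₂).conjTranspose = A ^ 2 * Y₂)
    (hY₂4 : (Y₂ * A ^ 2).conjTranspose = Y₂ * A ^ 2) :
    X * A * Y = A * Y₂ ∧ Y * A * X = Y₂ * A :=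
  core_inverse_simple_rep_general A X Y Y₂ hX1 hX3 hY1 hY3 hY4 hY₂1 hY₂3 hY₂4
end

section
/- Let A be an n×n quaternion matrix, let k ≥ 1 be an integer, let D be a Drazin inverse of A with index k, and let Y be a Moore–Penrose inverse of A. Then the matrix M := D·A·Y satisfies M·A·M = M, M·A = D·A, and A^k·M = A^k·Y; moreover, M is the unique matrix satisfying these three equations (M is the DMP inverse A^{d,†} = A^d A A† of A). -/
/-!
Every solution `M` of the three equations is pinned down by them: `M = M·A·M = D·A·M`, so
`M = (D·A)^k·M = D^k·A^k·M = D^k·A^k·Y` because `D` commutes with `A`. The candidate `D·A·Y` is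
checked to be a solution directly from `A·Y·A = A`, `D·A·D = D` and `D·A^(k+1) = A^k`.
-/

section DMP

variable {R : Type*} [Monoid R]

/-- `d` and `y` play the roles of a Drazin inverse of index `k` and a Moore–Penrose inverse of `a`. -/
def IsDMPSolution (k : ℕ) (a d y m : R) : Prop :=
  m * a * m = m ∧ m * a = d * a ∧ a ^ k * m = a ^ k * y

theorem IsDMPSolution.eq_pow_mul_pow_mul {k : ℕ} {a d y m : R} (hda : Commute d a)
    (hm : IsDMPSolution k a d y m) : m = d ^ k * a ^ k * y := by
  obtain ⟨hmam, hma, hakm⟩ := hm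
  have hdam : d * a * m = m := by rw [← hma, hmam]
  have hm_pow : ∀ j : ℕ, m = (d * a) ^ j * m := by
    intro j
    induction j with
    | zero => rw [pow_zero, one_mul]
    | succ j ih => rw [pow_succ, mul_assoc, hdam, ← ih]
  calc m = (d * a) ^ k * m := hm_pow k
    _ = d ^ k * (a ^ k * m) := by rw [hda.mul_pow, mul_assoc]
    _ = d ^ k * a ^ k * y := by rw [hakm, mul_assoc]

theorem isDMPSolution_mul_mul {k : ℕ} {a d y : R} (hda : Commute d a) (hdad : d * a * d = d)
    (hd : d * a ^ (k + 1) = a ^ k) (hy : a * y * a = a) :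
    IsDMPSolution k a d y (d * a * y) := by
  have hma : d * a * y * a = d * a := by rw [mul_assoc d, mul_assoc, hy]
  refine ⟨?_, hma, ?_⟩
  · rw [hma, ← mul_assoc, ← mul_assoc (d * a) d, hdad]
  · rw [← mul_assoc, ← mul_assoc, ← (hda.pow_right k).eq, mul_assoc d, ← pow_succ, hd]

end DMP

theorem dmp_inverse_general {n : ℕ} (k : ℕ)
    (A D Y : Matrix (Fin n) (Fin n) (Quaternion ℝ))
    (hD1 : A * D = D * A) (hD2 : D * A * D = D) (hD3 : D * A ^ (k + 1) = A ^ k)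
    (hY1 : A * Y * A = A) :
    ((D * A * Y) * A * (D * A * Y) = D * A * Y ∧
     (D * A * Y) * A = D * A ∧
     A ^ k * (D * A * Y) = A ^ k * Y) ∧
    (∀ M : Matrix (Fin n) (Fin n) (Quaternion ℝ),
      M * A * M = M → M * A = D * A → A ^ k * M = A ^ k * Y →
      M = D * A * Y) := by
  have hDA : Commute D A := hD1.symm
  have hDAY : IsDMPSolution k A D Y (D * A * Y) := isDMPSolution_mul_mul hDA hD2 hD3 hY1
  refine ⟨hDAY, fun M hMAM hMA hAkM => ?_⟩
  rw [IsDMPSolution.eq_pow_mul_pow_mul hDA ⟨hMAM, hMA, hAkM⟩, hDAY.eq_pow_mul_pow_mul hDA]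

/-- The DMP inverse `A^{d,†} = A^d·A·A†`: the matrix `M = D·A·Y` satisfies
`M·A·M = M`, `M·A = D·A`, `A^k·M = A^k·Y`, and it is the unique matrix
satisfying these three equations. -/
theorem dmp_inverse {n : ℕ} (k : ℕ) (hk : 1 ≤ k)
    (A D Y : Matrix (Fin n) (Fin n) (Quaternion ℝ))
    (hD1 : A * D = D * A) (hD2 : D * A * D = D) (hD3 : D * A ^ (k + 1) = A ^ k)
    (hY1 : A * Y * A = A) (hY2 : Y * A * Y = Y)
    (hY3 : (A * Y).conjTranspose = A * Y) (hY4 : (Y * A).conjTranspose = Y * A) :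
    ((D * A * Y) * A * (D * A * Y) = D * A * Y ∧
     (D * A * Y) * A = D * A ∧
     A ^ k * (D * A * Y) = A ^ k * Y) ∧
    (∀ M : Matrix (Fin n) (Fin n) (Quaternion ℝ),
      M * A * M = M → M * A = D * A → A ^ k * M = A ^ k * Y →
      M = D * A * Y) :=
  dmp_inverse_general k A D Y hD1 hD2 hD3 hY1
end

section
/- Let A be an n×n quaternion matrix, let k ≥ 1 be an integer, let D be a Drazin inverse of A with index k, and let Y be a Moore–Penrose inverse of A. Then the matrix M := Y·A·D satisfies M·A·M = M, A·M = A·D, and M·A^k = Y·A^k; moreover, M is the unique matrix satisfying these three equations (M is the MPD inverse A^{†,d} = A† A A^d of A). -/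
/-!
Since `A` and `D` commute and `D·A·D = D`, the product `A·D` is idempotent and equals
`A^(k+1)·D^(k+1)`; hence any `X` with `X·A^k = Y·A^k` also satisfies `X·A·D = Y·A·D`.
A solution `M` of the three equations has `M = M·A·M = M·A·D`, which therefore equals `Y·A·D`.
-/

section Monoid

variable {R : Type*} [Monoid R] {a d : R}

theorem isIdempotentElem_mul_of_mul_mul_eq (hd : d * a * d = d) : IsIdempotentElem (a * d) := by
  rw [IsIdempotentElem, mul_assoc, ← mul_assoc d, hd]

theorem pow_succ_mul_pow_succ_eq_mul (hc : Commute a d) (hd : d * a * d = d) (m : ℕ) :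
    a ^ (m + 1) * d ^ (m + 1) = a * d := by
  rw [← hc.mul_pow, (isIdempotentElem_mul_of_mul_mul_eq hd).pow_succ_eq]

theorem mul_mul_pow_eq_pow (hc : Commute a d) {k : ℕ} (hk : d * a ^ (k + 1) = a ^ k) (x : R) :
    x * a * d * a ^ k = x * a ^ k := by
  rw [mul_assoc x, hc.eq, mul_assoc, mul_assoc, ← pow_succ', hk]

theorem mul_mul_eq_of_mul_pow_eq (hc : Commute a d) (hd : d * a * d = d) {k : ℕ} {x y : R}
    (hxy : x * a ^ k = y * a ^ k) : x * a * d = y * a * d := by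
  calc x * a * d = x * a ^ k * (a * d ^ (k + 1)) := by
        rw [mul_assoc, ← pow_succ_mul_pow_succ_eq_mul hc hd k, pow_succ]
        simp only [mul_assoc]
    _ = y * a * d := by
        rw [hxy, mul_assoc, ← mul_assoc (a ^ k), ← pow_succ, pow_succ_mul_pow_succ_eq_mul hc hd,
          mul_assoc]

end Monoid

theorem mpd_inverse_general {n : ℕ} (k : ℕ)
    (A D Y : Matrix (Fin n) (Fin n) (Quaternion ℝ))
    (hD1 : A * D = D * A) (hD2 : D * A * D = D) (hD3 : D * A ^ (k + 1) = A ^ k)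
    (hY1 : A * Y * A = A) :
    ((Y * A * D) * A * (Y * A * D) = Y * A * D ∧
     A * (Y * A * D) = A * D ∧
     (Y * A * D) * A ^ k = Y * A ^ k) ∧
    (∀ M : Matrix (Fin n) (Fin n) (Quaternion ℝ),
      M * A * M = M → A * M = A * D → M * A ^ k = Y * A ^ k →
      M = Y * A * D) := by
  have hAYAD : A * (Y * A * D) = A * D := by rw [← mul_assoc, ← mul_assoc, hY1]
  refine ⟨⟨?_, hAYAD, mul_mul_pow_eq_pow hD1 hD3 Y⟩, fun M hM1 hM2 hM3 => ?_⟩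
  · rw [mul_assoc (Y * A * D), hAYAD, mul_assoc Y, mul_assoc,
      (isIdempotentElem_mul_of_mul_mul_eq hD2).eq]
  · calc M = M * (A * M) := by rw [← mul_assoc, hM1]
      _ = M * A * D := by rw [hM2, mul_assoc]
      _ = Y * A * D := mul_mul_eq_of_mul_pow_eq hD1 hD2 hM3

/-- The MPD inverse `A^{†,d} = A†·A·A^d`: the matrix `M = Y·A·D` satisfies
`M·A·M = M`, `A·M = A·D`, `M·A^k = Y·A^k`, and it is the unique matrix
satisfying these three equations. -/
theorem mpd_inverse {n : ℕ} (k : ℕ) (hk : 1 ≤ k)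
    (A D Y : Matrix (Fin n) (Fin n) (Quaternion ℝ))
    (hD1 : A * D = D * A) (hD2 : D * A * D = D) (hD3 : D * A ^ (k + 1) = A ^ k)
    (hY1 : A * Y * A = A) (hY2 : Y * A * Y = Y)
    (hY3 : (A * Y).conjTranspose = A * Y) (hY4 : (Y * A).conjTranspose = Y * A) :
    ((Y * A * D) * A * (Y * A * D) = Y * A * D ∧
     A * (Y * A * D) = A * D ∧
     (Y * A * D) * A ^ k = Y * A ^ k) ∧
    (∀ M : Matrix (Fin n) (Fin n) (Quaternion ℝ),
      M * A * M = M → A * M = A * D → M * A ^ k = Y * A ^ k →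
      M = Y * A * D) :=
  mpd_inverse_general k A D Y hD1 hD2 hD3 hY1
end

section
/- Let A be an n×n quaternion matrix, let k ≥ 1 be an integer, let D be a Drazin inverse of A with index k, and let Y be a Moore–Penrose inverse of A. Set A₁ := A·D·A (the core part of the core-nilpotent decomposition of A). Then the matrix X := Y·A₁·Y = (Y·A)·D·(A·Y) satisfies X·A·X = X, A·X·A = A₁, A·X = A₁·Y, and X·A = Y·A₁; moreover, X is the unique matrix satisfying these four equations (X is the CMP inverse A^{c,†} = Q_A A^d P_A of A). -/
/-! With `A₁ = A·D·A`, the candidate `X = Y·A₁·Y` is `Q_A·D·P_A`. The identity `A·Y·A = A`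
absorbs the idempotents `P_A = A·Y` and `Q_A = Y·A` next to `A`, and `D·A·D = D` collapses
`A₁·D·A₁` to `A₁`; this gives the four equations. Uniqueness follows by writing
`X = X·A·X = (X·A)·D·(A·Y)` and substituting `X·A = Y·A₁`. -/

section Semigroup

variable {M : Type*} [Semigroup M] {a b d y x : M}

theorem mul_mul_absorb (h : a * b * a = a) : a * (b * a) = a := by
  rw [← mul_assoc, h]

theorem mul_mul_mul_absorb (h : a * b * a = a) (z : M) : a * (b * (a * z)) = a * z := by
  rw [← mul_assoc, ← mul_assoc, h]

def cmpInverse (a d y : M) : M := y * (a * d * a) * y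

theorem cmpInverse_mul_mul_self (hd : d * a * d = d) (hy : a * y * a = a) :
    cmpInverse a d y * a * cmpInverse a d y = cmpInverse a d y := by
  simp only [cmpInverse, mul_assoc, mul_mul_mul_absorb hy, mul_mul_mul_absorb hd]

theorem mul_cmpInverse_mul (hy : a * y * a = a) :
    a * cmpInverse a d y * a = a * d * a := by
  simp only [cmpInverse, mul_assoc, mul_mul_mul_absorb hy, mul_mul_absorb hy]

theorem mul_cmpInverse (hy : a * y * a = a) :
    a * cmpInverse a d y = a * d * a * y := by
  simp only [cmpInverse, mul_assoc, mul_mul_mul_absorb hy]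

theorem cmpInverse_mul (hy : a * y * a = a) :
    cmpInverse a d y * a = y * (a * d * a) := by
  simp only [cmpInverse, mul_assoc, mul_mul_absorb hy]

theorem eq_cmpInverse (hd : d * a * d = d) (hx : x * a * x = x)
    (hax : a * x = a * d * a * y) (hxa : x * a = y * (a * d * a)) :
    x = cmpInverse a d y :=
  calc x = x * (a * x) := by rw [← mul_assoc, hx]
    _ = x * a * (d * (a * y)) := by rw [hax]; simp only [mul_assoc]
    _ = cmpInverse a d y := by
      rw [hxa]; simp only [cmpInverse, mul_assoc, mul_mul_mul_absorb hd]

end Semigroup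

theorem cmp_inverse_general {n : ℕ}
    (A D Y : Matrix (Fin n) (Fin n) (Quaternion ℝ))
    (hD2 : D * A * D = D)
    (hY1 : A * Y * A = A) :
    ((Y * (A * D * A) * Y) * A * (Y * (A * D * A) * Y) = Y * (A * D * A) * Y ∧
     A * (Y * (A * D * A) * Y) * A = A * D * A ∧
     A * (Y * (A * D * A) * Y) = (A * D * A) * Y ∧
     (Y * (A * D * A) * Y) * A = Y * (A * D * A)) ∧
    (∀ X : Matrix (Fin n) (Fin n) (Quaternion ℝ),
      X * A * X = X → A * X * A = A * D * A → A * X = (A * D * A) * Y →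
      X * A = Y * (A * D * A) → X = Y * (A * D * A) * Y) :=
  ⟨⟨cmpInverse_mul_mul_self hD2 hY1, mul_cmpInverse_mul hY1, mul_cmpInverse hY1,
      cmpInverse_mul hY1⟩,
    fun _ hX _ hAX hXA => eq_cmpInverse hD2 hX hAX hXA⟩

/-- The CMP inverse `A^{c,†} = Q_A·A^d·P_A`: with `A₁ := A·D·A`, the matrix
`X = Y·A₁·Y` satisfies `X·A·X = X`, `A·X·A = A₁`, `A·X = A₁·Y`, `X·A = Y·A₁`,
and it is the unique matrix satisfying these four equations. -/
theorem cmp_inverse {n : ℕ} (k : ℕ) (hk : 1 ≤ k)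
    (A D Y : Matrix (Fin n) (Fin n) (Quaternion ℝ))
    (hD1 : A * D = D * A) (hD2 : D * A * D = D) (hD3 : D * A ^ (k + 1) = A ^ k)
    (hY1 : A * Y * A = A) (hY2 : Y * A * Y = Y)
    (hY3 : (A * Y).conjTranspose = A * Y) (hY4 : (Y * A).conjTranspose = Y * A) :
    ((Y * (A * D * A) * Y) * A * (Y * (A * D * A) * Y) = Y * (A * D * A) * Y ∧
     A * (Y * (A * D * A) * Y) * A = A * D * A ∧
     A * (Y * (A * D * A) * Y) = (A * D * A) * Y ∧
     (Y * (A * D * A) * Y) * A = Y * (A * D * A)) ∧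
    (∀ X : Matrix (Fin n) (Fin n) (Quaternion ℝ),
      X * A * X = X → A * X * A = A * D * A → A * X = (A * D * A) * Y →
      X * A = Y * (A * D * A) → X = Y * (A * D * A) * Y) :=
  cmp_inverse_general A D Y hD2 hY1
end
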